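/- arXiv:2103.08215 — 4 statements merged into one kernel-verified Lean document; each statement's English description precedes it below -/
import Mathlib

section
/- For all α, β > 0 and x ∈ ℝ³, the kinetic energy integral t_{α,β}(x) = 2^{3/2} (αβ)^{7/4}/(α+β)^{5/2} · (3 − 2μ‖x‖²) exp(−μ‖x‖²) with μ = αβ/(α+β) satisfies |t_{α,β}(x)| ≤ (3/2) max{α, β}. -/
/-!
Write `t = μ‖x‖²`. For `t ≥ 0` we have `|3 - 2t| ≤ 3(1 + t) ≤ 3eᵗ`, so the Gaussian factor
`(3 - 2t)e⁻ᵗ` has absolute value at most `3`. By AM-GM, `α + β ≥ 2√(αβ)`, which bounds the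
prefactor `2^{3/2}(αβ)^{7/4}/(α+β)^{5/2}` by `√(αβ)/2 ≤ max α β / 2`.
-/

open Real

lemma abs_three_sub_two_mul_mul_exp_neg_le {t : ℝ} (ht : 0 ≤ t) :
    |(3 - 2 * t) * exp (-t)| ≤ 3 := by
  have hpoly : |3 - 2 * t| ≤ 3 * exp t :=
    (abs_le.2 ⟨by linarith, by linarith⟩ : |3 - 2 * t| ≤ 3 * (t + 1)).trans
      (by linarith [add_one_le_exp t])
  calc |(3 - 2 * t) * exp (-t)| = |3 - 2 * t| * exp (-t) := by
        rw [abs_mul, abs_of_pos (exp_pos _)]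
    _ ≤ 3 * exp t * exp (-t) := by gcongr
    _ = 3 := by rw [mul_assoc, ← exp_add, add_neg_cancel, exp_zero, mul_one]

lemma two_mul_sqrt_mul_le_add {a b : ℝ} (ha : 0 ≤ a) (hb : 0 ≤ b) : 2 * √(a * b) ≤ a + b := by
  rw [← le_div_iff₀' two_pos, sqrt_le_iff]
  exact ⟨by positivity, by nlinarith [sq_nonneg (a - b)]⟩

lemma two_rpow_mul_rpow_div_add_rpow_le {α β : ℝ} (hα : 0 < α) (hβ : 0 < β) :
    2 ^ ((3:ℝ)/2) * (α * β) ^ ((7:ℝ)/4) / (α + β) ^ ((5:ℝ)/2) ≤ √(α * β) / 2 := by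
  set g := √(α * β)
  have hg : 0 < g := sqrt_pos.2 (by positivity)
  have hαβ : (α * β) ^ ((7:ℝ)/4) = g ^ (5/2 + 1 : ℝ) := by
    rw [show g = (α * β) ^ (1/2 : ℝ) from sqrt_eq_rpow _, ← rpow_mul (by positivity)]
    norm_num
  calc 2 ^ ((3:ℝ)/2) * (α * β) ^ ((7:ℝ)/4) / (α + β) ^ ((5:ℝ)/2)
      ≤ 2 ^ ((3:ℝ)/2) * g ^ (5/2 + 1 : ℝ) / (2 * g) ^ ((5:ℝ)/2) := by
        rw [hαβ]; gcongr; exact two_mul_sqrt_mul_le_add hα.le hβ.le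
    _ = g / 2 := by
        have h2 : (2 : ℝ) ^ ((5:ℝ)/2) = 2 ^ ((3:ℝ)/2) * 2 := by
          rw [← rpow_add_one two_ne_zero]; norm_num
        rw [mul_rpow zero_le_two hg.le, rpow_add hg, rpow_one, h2]
        field_simp

lemma sqrt_mul_le_max_of_nonneg {a b : ℝ} (ha : 0 ≤ a) (hb : 0 ≤ b) : √(a * b) ≤ max a b :=
  sqrt_le_iff.2 ⟨le_max_of_le_left ha, by
    rw [sq]; exact mul_le_mul (le_max_left a b) (le_max_right a b) hb (le_max_of_le_left ha)⟩

theorem stmt2 (α β : ℝ) (hα : 0 < α) (hβ : 0 < β) (x : EuclideanSpace ℝ (Fin 3)) :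
    |2 ^ ((3:ℝ)/2) * (α * β) ^ ((7:ℝ)/4) / (α + β) ^ ((5:ℝ)/2) *
      ((3 - 2 * (α * β / (α + β)) * ‖x‖^2) * Real.exp (-(α * β / (α + β)) * ‖x‖^2))|
    ≤ 3/2 * max α β := by
  set t := α * β / (α + β) * ‖x‖ ^ 2
  have ht : 0 ≤ t := by positivity
  rw [abs_mul, abs_of_nonneg (by positivity), mul_assoc 2, neg_mul]
  calc _ ≤ √(α * β) / 2 * 3 :=
        mul_le_mul (two_rpow_mul_rpow_div_add_rpow_le hα hβ)
          (abs_three_sub_two_mul_mul_exp_neg_le ht) (abs_nonneg _) (by positivity)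
    _ ≤ max α β / 2 * 3 := by gcongr; exact sqrt_mul_le_max_of_nonneg hα.le hβ.le
    _ = 3/2 * max α β := by ring
end

section
/- Setting t₀ = (3/2)α, t₁ = (α/2)(3 − ω)e^{−ω/2}, ε = e^{−ω/2}, with α > 0, ω ≥ 4, the off-diagonal entry of R T R (with R as in the previous context) equals −(α/2)·ω e^{−ω/2}/(1 − ε²), and satisfies −(α/2)√(f(ω))(1 + 4ε²) ≤ off-diagonal ≤ −(α/2)√(f(ω)), where f(ω) = ω² e^{−ω}. -/
/-! With `u = 1/√(1+ε)` and `v = 1/√(1-ε)` the entries of `R` are `(u ± v)/2`, so the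
off-diagonal entry of `R T R` is `(t₁ (u² + v²) + t₀ (u² - v²))/2 = (t₁ - ε t₀)/(1 - ε²)`,
which for the given `t₀, t₁` is `-(α/2) ω ε/(1 - ε²)`. Since `√(ω² e^{-ω}) = ω ε`, both bounds
reduce to `1 ≤ 1/(1 - ε²) ≤ 1 + 4ε²`, and the second holds because `ε ≤ e^{-2} < 1/2`. -/

open Real

lemma circulant_mul_mul_apply_zero_one {K : Type*} [CommRing K] (a b c d : K) :
    (!![a, b; b, a] * !![c, d; d, c] * !![a, b; b, a]) 0 1 =
      d * (a ^ 2 + b ^ 2) + c * (2 * a * b) := by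
  simp only [Matrix.mul_apply, Fin.sum_univ_two, Matrix.of_apply, Matrix.cons_val',
    Matrix.cons_val_zero, Matrix.cons_val_one, Matrix.empty_val', Matrix.cons_val_fin_one]
  ring

lemma one_div_sqrt_sq {x : ℝ} (hx : 0 ≤ x) : (1 / √x) ^ 2 = 1 / x := by
  rw [div_pow, one_pow, sq_sqrt hx]

lemma half_sum_half_diff_inv_sqrt {ε : ℝ} (h₁ : -1 < ε) (h₂ : ε < 1) (c d : ℝ) :
    let a := (1 / √(1 + ε) + 1 / √(1 - ε)) / 2
    let b := (1 / √(1 + ε) - 1 / √(1 - ε)) / 2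
    d * (a ^ 2 + b ^ 2) + c * (2 * a * b) = (d - ε * c) / (1 - ε ^ 2) := by
  intro a b
  have hp : 0 < 1 + ε := by linarith
  have hm : 0 < 1 - ε := by linarith
  calc d * (a ^ 2 + b ^ 2) + c * (2 * a * b)
      = (d * ((1 / √(1 + ε)) ^ 2 + (1 / √(1 - ε)) ^ 2)
          + c * ((1 / √(1 + ε)) ^ 2 - (1 / √(1 - ε)) ^ 2)) / 2 := by ring
    _ = (d - ε * c) / (1 - ε ^ 2) := by
      rw [one_div_sqrt_sq hp.le, one_div_sqrt_sq hm.le]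
      field_simp [show 1 - ε ^ 2 = (1 + ε) * (1 - ε) by ring]
      ring

lemma exp_neg_half_le_half {ω : ℝ} (hω : 2 ≤ ω) : exp (-ω / 2) ≤ 1 / 2 :=
  calc exp (-ω / 2) ≤ exp (-1) := exp_le_exp.2 (by linarith)
    _ ≤ 1 / 2 := exp_neg_one_lt_half.le

lemma sqrt_sq_mul_exp_neg {ω : ℝ} (hω : 0 ≤ ω) : √(ω ^ 2 * exp (-ω)) = ω * exp (-ω / 2) := by
  rw [show ω ^ 2 * exp (-ω) = (ω * exp (-ω / 2)) ^ 2 by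
    rw [mul_pow, sq (exp _), ← exp_add]; ring_nf]
  exact sqrt_sq (by positivity)

lemma one_div_one_sub_le {s : ℝ} (hs₀ : 0 ≤ s) (hs : s ≤ 3 / 4) : 1 / (1 - s) ≤ 1 + 4 * s := by
  rw [div_le_iff₀ (by linarith)]
  nlinarith

theorem stmt15 (α ω : ℝ) (hα : 0 < α) (hω : 4 ≤ ω) :
    let ε := Real.exp (-ω/2)
    let rOn := (1 / Real.sqrt (1 + ε) + 1 / Real.sqrt (1 - ε)) / 2
    let rOff := (1 / Real.sqrt (1 + ε) - 1 / Real.sqrt (1 - ε)) / 2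
    let t₀ := 3/2 * α
    let t₁ := α/2 * (3 - ω) * Real.exp (-ω/2)
    let T : Matrix (Fin 2) (Fin 2) ℝ := !![t₀, t₁; t₁, t₀]
    let R : Matrix (Fin 2) (Fin 2) ℝ := !![rOn, rOff; rOff, rOn]
    (R * T * R) 0 1 = -(α/2) * ω * Real.exp (-ω/2) / (1 - ε^2) ∧
    -(α/2) * Real.sqrt (ω^2 * Real.exp (-ω)) * (1 + 4 * ε^2) ≤ (R * T * R) 0 1 ∧
    (R * T * R) 0 1 ≤ -(α/2) * Real.sqrt (ω^2 * Real.exp (-ω)) := by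
  intro ε rOn rOff t₀ t₁ T R
  have hε₀ : 0 < ε := exp_pos _
  have hε : ε ≤ 1 / 2 := exp_neg_half_le_half (by linarith)
  have hentry : (R * T * R) 0 1 = -(α / 2) * ω * ε / (1 - ε ^ 2) := by
    rw [circulant_mul_mul_apply_zero_one, half_sum_half_diff_inv_sqrt (by linarith) (by linarith)]
    ring
  have hsqrt : √(ω ^ 2 * exp (-ω)) = ω * ε := sqrt_sq_mul_exp_neg (by linarith)
  have hx : 0 ≤ α / 2 * ω * ε := by positivity
  have hlo := mul_le_mul_of_nonneg_left
    (one_div_one_sub_le (sq_nonneg ε) (by nlinarith)) hx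
  have hhi := mul_le_mul_of_nonneg_left
    (one_le_one_div (by nlinarith) (by nlinarith : 1 - ε ^ 2 ≤ 1)) hx
  refine ⟨hentry, ?_, ?_⟩ <;> rw [hentry, hsqrt]
  · linear_combination hlo
  · linear_combination hhi
end

section
/- Setting t₀ = (3/2)α, t₁ = (α/2)(3 − ω)e^{−ω/2}, ε = e^{−ω/2}, ω ≥ 4, α > 0, the diagonal entry of R T R equals (3/2)α + αω ε²/(2(1 − ε²)) and satisfies (3/2)α ≤ diagonal ≤ (3/2)α + αω ε². -/
/-!
Both matrices are of the form `!![p, q; q, p]`, so the `(0, 0)` entry of `R T R` is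
`(rOn² + rOff²) t₀ + 2 rOn rOff t₁`. Since `rOn ± rOff` are `1/√(1 ± ε)`, these coefficients are
`1/(1 - ε²)` and `-ε/(1 - ε²)`, which gives the closed form `(t₀ - ε t₁)/(1 - ε²)`. For `ω ≥ 4`
we have `ε < 1/2`, so the correction term `α ω ε² / (2 (1 - ε²))` lies between `0` and `α ω ε²`.
-/

open Real

lemma Matrix.symmCirculant_mul_mul_apply_zero_zero {K : Type*} [CommRing K] (p q s t : K) :
    (!![p, q; q, p] * !![s, t; t, s] * !![p, q; q, p]) 0 0 = (p ^ 2 + q ^ 2) * s + 2 * p * q * t := by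
  simp only [Matrix.mul_apply, Fin.sum_univ_two, Matrix.of_apply, Matrix.cons_val',
    Matrix.cons_val_zero, Matrix.cons_val_one, Matrix.empty_val', Matrix.cons_val_fin_one]
  ring

lemma one_div_sqrt_sq_s16 {u : ℝ} (hu : 0 ≤ u) : (1 / √u) ^ 2 = 1 / u := by
  rw [div_pow, one_pow, sq_sqrt hu]

lemma inv_sqrt_conj_apply_zero_zero {ε : ℝ} (hε₁ : -1 < ε) (hε₂ : ε < 1) (s t : ℝ) :
    let x := 1 / √(1 + ε)
    let y := 1 / √(1 - ε)
    (!![(x + y) / 2, (x - y) / 2; (x - y) / 2, (x + y) / 2] * !![s, t; t, s] *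
        !![(x + y) / 2, (x - y) / 2; (x - y) / 2, (x + y) / 2]) 0 0
      = (s - ε * t) / (1 - ε ^ 2) := by
  intro x y
  have hx : x ^ 2 = 1 / (1 + ε) := one_div_sqrt_sq_s16 (by linarith)
  have hy : y ^ 2 = 1 / (1 - ε) := one_div_sqrt_sq_s16 (by linarith)
  have hpos : 1 + ε ≠ 0 := by linarith
  have hneg : 1 - ε ≠ 0 := by linarith
  have h₂ : 1 - ε ^ 2 ≠ 0 := by
    rw [show 1 - ε ^ 2 = (1 + ε) * (1 - ε) by ring]; exact mul_ne_zero hpos hneg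
  calc _ = ((x ^ 2 + y ^ 2) * s + (x ^ 2 - y ^ 2) * t) / 2 := by
        rw [Matrix.symmCirculant_mul_mul_apply_zero_zero]; ring
    _ = (s - ε * t) / (1 - ε ^ 2) := by
        rw [hx, hy]; field_simp; ring

lemma exp_neg_half_lt_half {ω : ℝ} (hω : 4 ≤ ω) : exp (-ω / 2) < 1 / 2 := by
  have h : ω / 2 + 1 < exp (ω / 2) := add_one_lt_exp (by positivity)
  rw [neg_div, exp_neg, one_div]
  exact inv_strictAnti₀ two_pos (by linarith)

theorem stmt16 (α ω : ℝ) (hα : 0 < α) (hω : 4 ≤ ω) :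
    let ε := Real.exp (-ω/2)
    let rOn := (1 / Real.sqrt (1 + ε) + 1 / Real.sqrt (1 - ε)) / 2
    let rOff := (1 / Real.sqrt (1 + ε) - 1 / Real.sqrt (1 - ε)) / 2
    let t₀ := 3/2 * α
    let t₁ := α/2 * (3 - ω) * Real.exp (-ω/2)
    let T : Matrix (Fin 2) (Fin 2) ℝ := !![t₀, t₁; t₁, t₀]
    let R : Matrix (Fin 2) (Fin 2) ℝ := !![rOn, rOff; rOff, rOn]
    (R * T * R) 0 0 = 3/2 * α + α * ω * ε^2 / (2 * (1 - ε^2)) ∧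
    3/2 * α ≤ (R * T * R) 0 0 ∧
    (R * T * R) 0 0 ≤ 3/2 * α + α * ω * ε^2 := by
  intro ε rOn rOff t₀ t₁ T R
  have hε₀ : 0 < ε := exp_pos _
  have hε₁ : ε < 1 / 2 := exp_neg_half_lt_half hω
  have hden : 1 ≤ 2 * (1 - ε ^ 2) := by nlinarith
  have hentry : (R * T * R) 0 0 = 3/2 * α + α * ω * ε^2 / (2 * (1 - ε^2)) := by
    have h : 1 - ε ^ 2 ≠ 0 := by nlinarith
    rw [inv_sqrt_conj_apply_zero_zero (by linarith) (by linarith)]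
    simp only [t₀, t₁, show exp (-ω / 2) = ε from rfl]
    field_simp
    ring
  have hcorr : 0 ≤ α * ω * ε ^ 2 := by positivity
  refine ⟨hentry, ?_, ?_⟩ <;> rw [hentry]
  · have := div_nonneg hcorr (zero_le_one.trans hden)
    linarith
  · have := div_le_self hcorr hden
    linarith
end

section
/- Let S_OD and S_neg be m×m real matrices with disjoint supports, all entries of S_OD in [0, ε_max], each row and column of S_OD containing at most one nonzero entry, and all entries of S_neg in [0, ε_neg]. If the number of indices m ≤ 2n² and 2n² ε_neg ≤ ε_max, then for every k ≥ 1 and all indices (i,j): [(S_OD + S_neg)^k − S_OD^k]_{i,j} ≤ k · (2n² ε_neg) · (2ε_max)^{k−1}. -/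
/-!
Work in the ℓ∞-operator norm on matrices (maximal absolute row sum), which is submultiplicative
and dominates every entry. Since each row of `S_OD` has at most one nonzero entry,
`‖S_OD‖ ≤ εmax`; each row of `S_neg` has at most `m` entries, so `‖S_neg‖ ≤ m εneg ≤ 2n²εneg ≤ εmax`,
whence `‖S_OD + S_neg‖ ≤ 2εmax`. The telescoping identity
`a^(k+1) - b^(k+1) = a (a^k - b^k) + (a - b) b^k` gives `‖a^k - b^k‖ ≤ k ‖a - b‖ r^(k-1)` whenever
`‖a‖, ‖b‖ ≤ r`, and here `a - b = S_neg`.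
-/

theorem norm_pow_succ_sub_pow_succ_le {R : Type*} [SeminormedRing R] {a b : R} {r : ℝ}
    (ha : ‖a‖ ≤ r) (hb : ‖b‖ ≤ r) (k : ℕ) :
    ‖a ^ (k + 1) - b ^ (k + 1)‖ ≤ (k + 1) * ‖a - b‖ * r ^ k := by
  induction k with
  | zero => simp
  | succ k ih =>
    have hr : 0 ≤ r := (norm_nonneg a).trans ha
    have hbk : ‖b ^ (k + 1)‖ ≤ r ^ (k + 1) :=
      (norm_pow_le' b k.succ_pos).trans (pow_le_pow_left₀ (norm_nonneg b) hb _)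
    have telescope : a ^ (k + 2) - b ^ (k + 2) =
        a * (a ^ (k + 1) - b ^ (k + 1)) + (a - b) * b ^ (k + 1) := by
      rw [pow_succ' a, pow_succ' b]; noncomm_ring
    calc ‖a ^ (k + 2) - b ^ (k + 2)‖
        ≤ ‖a‖ * ‖a ^ (k + 1) - b ^ (k + 1)‖ + ‖a - b‖ * ‖b ^ (k + 1)‖ := by
          rw [telescope]
          exact (norm_add_le _ _).trans (add_le_add (norm_mul_le _ _) (norm_mul_le _ _))
      _ ≤ r * ((k + 1) * ‖a - b‖ * r ^ k) + ‖a - b‖ * r ^ (k + 1) := by gcongr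
      _ = (↑(k + 1) + 1) * ‖a - b‖ * r ^ (k + 1) := by push_cast; ring

theorem norm_pow_sub_pow_le {R : Type*} [SeminormedRing R] {a b : R} {r : ℝ}
    (ha : ‖a‖ ≤ r) (hb : ‖b‖ ≤ r) (k : ℕ) :
    ‖a ^ k - b ^ k‖ ≤ k * ‖a - b‖ * r ^ (k - 1) := by
  cases k with
  | zero => simp
  | succ k => simpa using norm_pow_succ_sub_pow_succ_le ha hb k

theorem Fintype.sum_le_of_support_subsingleton {ι : Type*} [Fintype ι] {f : ι → ℝ} {c : ℝ}
    (hc : 0 ≤ c) (hf : ∀ i, f i ≤ c) (hsupp : (Function.support f).Subsingleton) :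
    ∑ i, f i ≤ c := by
  obtain hempty | ⟨i, hi⟩ := hsupp.eq_empty_or_singleton
  · simp_all [Function.support_eq_empty_iff]
  · rw [Finset.sum_eq_single i (fun j _ hj => Function.notMem_support.1 (by simp [hi, hj]))
      (by simp)]
    exact hf i

namespace Matrix

section LinftyOp

attribute [local instance] Matrix.linftyOpNormedAddCommGroup

variable {m n α : Type*} [Fintype m] [Fintype n] [NormedAddCommGroup α]

theorem linfty_opNorm_le_of_forall_sum_le {A : Matrix m n α} {r : ℝ} (hr : 0 ≤ r)
    (h : ∀ i, ∑ j, ‖A i j‖ ≤ r) : ‖A‖ ≤ r := by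
  lift r to NNReal using hr
  rw [linfty_opNorm_def, NNReal.coe_le_coe]
  exact Finset.sup_le fun i _ => by rw [← NNReal.coe_le_coe]; push_cast; exact h i

theorem norm_entry_le_linfty_opNorm (A : Matrix m n α) (i : m) (j : n) : ‖A i j‖ ≤ ‖A‖ := by
  rw [linfty_opNorm_def]
  calc ‖A i j‖ ≤ ∑ j', ‖A i j'‖ :=
        Finset.single_le_sum (fun j' _ => norm_nonneg (A i j')) (Finset.mem_univ j)
    _ = ((∑ j', ‖A i j'‖₊ : NNReal) : ℝ) := by push_cast; rfl
    _ ≤ _ := NNReal.coe_le_coe.2 (Finset.le_sup (f := fun i => ∑ j, ‖A i j‖₊) (Finset.mem_univ i))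

theorem linfty_opNorm_le_card_mul {A : Matrix m n α} {c : ℝ} (hc : 0 ≤ c)
    (h : ∀ i j, ‖A i j‖ ≤ c) : ‖A‖ ≤ Fintype.card n * c :=
  linfty_opNorm_le_of_forall_sum_le (by positivity) fun i =>
    (Finset.sum_le_sum fun j _ => h i j).trans_eq (by simp)

theorem linfty_opNorm_le_of_support_subsingleton {A : Matrix m n α} {c : ℝ} (hc : 0 ≤ c)
    (h : ∀ i j, ‖A i j‖ ≤ c) (hrow : ∀ i, (Function.support (A i)).Subsingleton) : ‖A‖ ≤ c :=
  linfty_opNorm_le_of_forall_sum_le hc fun i =>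
    Fintype.sum_le_of_support_subsingleton hc (h i) ((hrow i).anti fun j hj => by simpa using hj)

end LinftyOp

end Matrix

theorem stmt18_general (n m : ℕ) (hm : m ≤ 2 * n^2)
    (S_OD S_neg : Matrix (Fin m) (Fin m) ℝ) (εmax εneg : ℝ)
    (hεmax : 0 ≤ εmax) (hεneg : 0 ≤ εneg)
    (hsmall : 2 * (n:ℝ)^2 * εneg ≤ εmax)
    (hOD : ∀ i j, 0 ≤ S_OD i j ∧ S_OD i j ≤ εmax)
    (hneg : ∀ i j, 0 ≤ S_neg i j ∧ S_neg i j ≤ εneg)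
    (hrow : ∀ i j j', S_OD i j ≠ 0 → S_OD i j' ≠ 0 → j = j')
    (k : ℕ) (i j : Fin m) :
    ((S_OD + S_neg) ^ k - S_OD ^ k) i j
      ≤ k * (2 * (n:ℝ)^2 * εneg) * (2 * εmax) ^ (k - 1) := by
  let _ : NormedRing (Matrix (Fin m) (Fin m) ℝ) := Matrix.linftyOpNormedRing
  have hOD_norm : ‖S_OD‖ ≤ εmax :=
    Matrix.linfty_opNorm_le_of_support_subsingleton hεmax
      (fun i j => by rw [Real.norm_of_nonneg (hOD i j).1]; exact (hOD i j).2)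
      (fun i j hj j' hj' => hrow i j j' hj hj')
  have hneg_norm : ‖S_neg‖ ≤ 2 * (n:ℝ)^2 * εneg :=
    calc ‖S_neg‖ ≤ Fintype.card (Fin m) * εneg :=
          Matrix.linfty_opNorm_le_card_mul hεneg
            (fun i j => by rw [Real.norm_of_nonneg (hneg i j).1]; exact (hneg i j).2)
      _ ≤ 2 * (n:ℝ)^2 * εneg := by rw [Fintype.card_fin]; gcongr; exact_mod_cast hm
  have hsum_norm : ‖S_OD + S_neg‖ ≤ 2 * εmax := by
    linarith [norm_add_le S_OD S_neg]
  calc ((S_OD + S_neg) ^ k - S_OD ^ k) i j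
      ≤ ‖(S_OD + S_neg) ^ k - S_OD ^ k‖ :=
        (Real.le_norm_self _).trans (Matrix.norm_entry_le_linfty_opNorm _ i j)
    _ ≤ k * ‖S_OD + S_neg - S_OD‖ * (2 * εmax) ^ (k - 1) :=
        norm_pow_sub_pow_le hsum_norm (by linarith) k
    _ ≤ k * (2 * (n:ℝ)^2 * εneg) * (2 * εmax) ^ (k - 1) := by
        rw [add_sub_cancel_left]; gcongr

theorem stmt18 (n m : ℕ) (hn : 1 ≤ n) (hm : m ≤ 2 * n^2)
    (S_OD S_neg : Matrix (Fin m) (Fin m) ℝ) (εmax εneg : ℝ)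
    (hεmax : 0 ≤ εmax) (hεneg : 0 ≤ εneg)
    (hsmall : 2 * (n:ℝ)^2 * εneg ≤ εmax)
    (hOD : ∀ i j, 0 ≤ S_OD i j ∧ S_OD i j ≤ εmax)
    (hneg : ∀ i j, 0 ≤ S_neg i j ∧ S_neg i j ≤ εneg)
    (hdisj : ∀ i j, S_OD i j = 0 ∨ S_neg i j = 0)
    (hrow : ∀ i j j', S_OD i j ≠ 0 → S_OD i j' ≠ 0 → j = j')
    (hcol : ∀ i i' j, S_OD i j ≠ 0 → S_OD i' j ≠ 0 → i = i')
    (hODdiag : ∀ i, S_OD i i = 0) (hnegdiag : ∀ i, S_neg i i = 0)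
    (k : ℕ) (hk : 1 ≤ k) (i j : Fin m) :
    ((S_OD + S_neg) ^ k - S_OD ^ k) i j
      ≤ k * (2 * (n:ℝ)^2 * εneg) * (2 * εmax) ^ (k - 1) :=
  stmt18_general n m hm S_OD S_neg εmax εneg hεmax hεneg hsmall hOD hneg hrow k i j
end
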